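/- Let (S_k) be a sequence in a normed space converging to f with ‖S_k − f‖ ≤ C·E_{k+1} for a nonincreasing nonnegative sequence (E_k), and let ψ be positive, nonincreasing with ψ(k) → 0. Then ‖Σ_{k=n}^∞ ψ(k)(S_k − S_{k−1})‖ ≤ C'·ψ(n)·E_n for an absolute constant C' (assuming the series converges). -/

import Mathlib

/-! Writing `a k = S k - f`, the differences `S k - S (k - 1)` are differences of `a`, so Abel
summation turns a partial sum of the series into two boundary terms plus
`∑ (ψ k - ψ (k + 1)) • a k`. Each `a k` with `k ≥ n - 1` has norm at most `C * E n`, and the weights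
`ψ k - ψ (k + 1)` are nonnegative and telescope, so every partial sum has norm at most
`2 * C * ψ n * E n`, and so does the series. -/

open Finset Filter

theorem sum_range_smul_sub_eq_by_parts {R M : Type*} [CommRing R] [AddCommGroup M] [Module R M]
    (ψ : ℕ → R) (a : ℕ → M) (n N : ℕ) :
    ∑ j ∈ range (N + 1), ψ (n + j) • (a (n + j) - a (n + j - 1)) =
      ψ (n + N) • a (n + N) - ψ n • a (n - 1) +
        ∑ j ∈ range N, (ψ (n + j) - ψ (n + j + 1)) • a (n + j) := by
  induction N with
  | zero => simp [smul_sub]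
  | succ N ih =>
    rw [sum_range_succ, ih, sum_range_succ, show n + (N + 1) - 1 = n + N by omega,
      ← Nat.add_assoc]
    module

section

variable {X : Type*} [NormedAddCommGroup X] [NormedSpace ℝ X]

theorem norm_sum_range_antitone_diff_smul_le {ψ : ℕ → ℝ} (hψ : Antitone ψ) {a : ℕ → X} {M : ℝ}
    {n : ℕ} (ha : ∀ k, n ≤ k → ‖a k‖ ≤ M) (N : ℕ) :
    ‖∑ j ∈ range N, (ψ (n + j) - ψ (n + j + 1)) • a (n + j)‖ ≤ (ψ n - ψ (n + N)) * M := by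
  have hdiff : ∀ j, 0 ≤ ψ (n + j) - ψ (n + j + 1) := fun j => sub_nonneg.2 (hψ (by omega))
  calc ‖∑ j ∈ range N, (ψ (n + j) - ψ (n + j + 1)) • a (n + j)‖
      ≤ ∑ j ∈ range N, (ψ (n + j) - ψ (n + j + 1)) * M := by
        refine (norm_sum_le _ _).trans (sum_le_sum fun j _ => ?_)
        rw [norm_smul, Real.norm_of_nonneg (hdiff j)]
        exact mul_le_mul_of_nonneg_left (ha _ (by omega)) (hdiff j)
    _ = (ψ n - ψ (n + N)) * M := by
        rw [← sum_mul]
        exact congrArg (· * M) (sum_range_sub' (fun j => ψ (n + j)) N)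

theorem norm_sum_range_smul_sub_le {ψ : ℕ → ℝ} (hψ : Antitone ψ) (hψ0 : ∀ k, 0 ≤ ψ k)
    {a : ℕ → X} {M : ℝ} {n : ℕ} (ha : ∀ k, n ≤ k + 1 → ‖a k‖ ≤ M) (N : ℕ) :
    ‖∑ j ∈ range (N + 1), ψ (n + j) • (a (n + j) - a (n + j - 1))‖ ≤ 2 * ψ n * M := by
  have h_last : ‖ψ (n + N) • a (n + N)‖ ≤ ψ (n + N) * M := by
    rw [norm_smul, Real.norm_of_nonneg (hψ0 _)]
    exact mul_le_mul_of_nonneg_left (ha _ (by omega)) (hψ0 _)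
  have h_first : ‖ψ n • a (n - 1)‖ ≤ ψ n * M := by
    rw [norm_smul, Real.norm_of_nonneg (hψ0 _)]
    exact mul_le_mul_of_nonneg_left (ha _ (by omega)) (hψ0 _)
  have h_middle := norm_sum_range_antitone_diff_smul_le hψ (n := n) (fun k hk => ha k (by omega)) N
  rw [sum_range_smul_sub_eq_by_parts]
  calc _ ≤ ‖ψ (n + N) • a (n + N)‖ + ‖ψ n • a (n - 1)‖ +
          ‖∑ j ∈ range N, (ψ (n + j) - ψ (n + j + 1)) • a (n + j)‖ :=
        (norm_add_le _ _).trans (add_le_add_left (norm_sub_le _ _) _)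
    _ ≤ 2 * ψ n * M := by linarith

end

theorem norm_tsum_le_of_norm_sum_range_succ_le {X : Type*} [NormedAddCommGroup X] {g : ℕ → X}
    (hg : Summable g) {B : ℝ} (hB : ∀ N, ‖∑ j ∈ range (N + 1), g j‖ ≤ B) : ‖∑' j, g j‖ ≤ B :=
  le_of_tendsto' ((hg.hasSum.tendsto_sum_nat.comp (tendsto_add_atTop_nat 1)).norm) hB

theorem main_estimate_general {X : Type*} [NormedAddCommGroup X] [NormedSpace ℝ X]
    (S : ℕ → X) (f : X) (E ψ : ℕ → ℝ) (C : ℝ) (hC : 0 < C)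
    (happrox : ∀ k, ‖S k - f‖ ≤ C * E (k + 1))
    (hEmono : ∀ k, E (k + 1) ≤ E k)
    (hψpos : ∀ k, 0 < ψ k) (hψmono : ∀ k, ψ (k + 1) ≤ ψ k)
    (hsum : ∀ n : ℕ, 1 ≤ n →
      Summable fun j : ℕ => ψ (n + j) • (S (n + j) - S (n + j - 1))) :
    ∃ C' : ℝ, 0 < C' ∧ ∀ n : ℕ, 1 ≤ n →
      ‖∑' j : ℕ, ψ (n + j) • (S (n + j) - S (n + j - 1))‖ ≤ C' * ψ n * E n := by
  refine ⟨2 * C, by positivity, fun n hn => ?_⟩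
  have h_tail : ∀ k, n ≤ k + 1 → ‖S k - f‖ ≤ C * E n := fun k hk =>
    (happrox k).trans (mul_le_mul_of_nonneg_left (antitone_nat_of_succ_le hEmono hk) hC.le)
  refine norm_tsum_le_of_norm_sum_range_succ_le (hsum n hn) fun N => ?_
  have h_diff : ∀ k l, S k - S l = (S k - f) - (S l - f) := fun k l =>
    (sub_sub_sub_cancel_right _ _ _).symm
  simp_rw [h_diff]
  calc _ ≤ 2 * ψ n * (C * E n) :=
        norm_sum_range_smul_sub_le (antitone_nat_of_succ_le hψmono) (fun k => (hψpos k).le) h_tail N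
    _ = 2 * C * ψ n * E n := by ring

/-- Abstract form of the main estimate in Theorem 1: if ‖S_k − f‖ ≤ C·E_{k+1}
for a nonincreasing nonnegative E and ψ is positive, nonincreasing, tending
to 0, then ‖Σ_{k=n}^∞ ψ(k)(S_k − S_{k−1})‖ ≤ C'·ψ(n)·E_n. -/
theorem main_estimate {X : Type*} [NormedAddCommGroup X] [NormedSpace ℝ X]
    (S : ℕ → X) (f : X) (E ψ : ℕ → ℝ) (C : ℝ) (hC : 0 < C)
    (happrox : ∀ k, ‖S k - f‖ ≤ C * E (k + 1))
    (hE0 : ∀ k, 0 ≤ E k) (hEmono : ∀ k, E (k + 1) ≤ E k)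
    (hψpos : ∀ k, 0 < ψ k) (hψmono : ∀ k, ψ (k + 1) ≤ ψ k)
    (hψlim : Filter.Tendsto ψ Filter.atTop (nhds 0))
    (hsum : ∀ n : ℕ, 1 ≤ n →
      Summable fun j : ℕ => ψ (n + j) • (S (n + j) - S (n + j - 1))) :
    ∃ C' : ℝ, 0 < C' ∧ ∀ n : ℕ, 1 ≤ n →
      ‖∑' j : ℕ, ψ (n + j) • (S (n + j) - S (n + j - 1))‖ ≤ C' * ψ n * E n :=
  main_estimate_general S f E ψ C hC happrox hEmono hψpos hψmono hsum
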